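/- arXiv:2009.04383 — 2 statements merged into one kernel-verified Lean document; each statement's English description precedes it below -/
import Mathlib

section
/- If the map sending a function h to the conditional probability p_{x,y}(h,a) is M-Lipschitz with respect to the sup-distance on functions, g is ε-noncomparatively fair with respect to f, and f satisfies δ-statistical parity, then g satisfies (2Mε + δ)-statistical parity. -/
theorem stmt3 {X Y A V : Type*} [PseudoMetricSpace Y]
    (p : (X → Y) → A → X → V → ℝ) (f g : X → Y) (M ε δ : ℝ)
    (hLip : ∀ (h₁ h₂ : X → Y) (ε' : ℝ), (∀ x, dist (h₁ x) (h₂ x) < ε') →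
      ∀ a x y, |p h₁ a x y - p h₂ a x y| < M * ε')
    (hf : ∀ a a' x y, |p f a x y - p f a' x y| < δ)
    (hg : ∀ x, dist (g x) (f x) < ε) :
    ∀ a a' x y, |p g a x y - p g a' x y| < 2 * M * ε + δ := by
  intro a a' x y
  have h1 := hLip g f ε hg a x y
  have h2 := hLip g f ε hg a' x y
  have h3 := hf a a' x y
  calc |p g a x y - p g a' x y|
      ≤ |p g a x y - p f a x y| + |p f a x y - p f a' x y| + |p f a' x y - p g a' x y| := by
        have := abs_sub_le (p g a x y) (p f a' x y) (p g a' x y)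
        have := abs_sub_le (p g a x y) (p f a x y) (p f a' x y)
        linarith
    _ < M * ε + δ + M * ε := by
        rw [abs_sub_comm (p f a' x y)]
        linarith
    _ = 2 * M * ε + δ := by ring
end

section
/- Assume the M-Lipschitz continuity of conditional probabilities with respect to the sup-distance, the benchmark f satisfies δ-statistical parity, and the auditor g is ε-noncomparatively fair with respect to f with ε < (δ' − δ)/(2M) (where δ' > δ and M > 0). Then g satisfies δ'-statistical parity. -/
theorem stmt5 {X Y A V : Type*} [PseudoMetricSpace Y]
    (p : (X → Y) → A → X → V → ℝ) (f g : X → Y) (M ε δ δ' : ℝ)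
    (hM : M > 0) (hδ' : δ' > δ)
    (hLip : ∀ (h₁ h₂ : X → Y) (ε' : ℝ), (∀ x, dist (h₁ x) (h₂ x) < ε') →
      ∀ a x y, |p h₁ a x y - p h₂ a x y| < M * ε')
    (hf : ∀ a a' x y, |p f a x y - p f a' x y| < δ)
    (hg : ∀ x, dist (g x) (f x) < ε)
    (hε : ε < (δ' - δ) / (2 * M)) :
    ∀ a a' x y, |p g a x y - p g a' x y| < δ' := by
  intro a a' x y
  have h1 := hLip g f ε hg a x y
  have h2 := hLip g f ε hg a' x y
  have h3 := hf a a' x y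
  have hMε : ε * (2 * M) < δ' - δ := (lt_div_iff₀ (by positivity)).mp hε
  have tri : |p g a x y - p g a' x y| ≤
      |p g a x y - p f a x y| + |p f a x y - p f a' x y| + |p f a' x y - p g a' x y| := by
    calc |p g a x y - p g a' x y|
        ≤ |p g a x y - p f a' x y| + |p f a' x y - p g a' x y| := abs_sub_le _ _ _
      _ ≤ |p g a x y - p f a x y| + |p f a x y - p f a' x y| + |p f a' x y - p g a' x y| := by
          linarith [abs_sub_le (p g a x y) (p f a x y) (p f a' x y)]
  have h2' : |p f a' x y - p g a' x y| < M * ε := by rw [abs_sub_comm]; exact h2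
  linarith
end
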